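/- For any separation logic 𝓛 with frame and consequence rules, the havoc-free special case of the exhale-havoc-inhale lemma holds: if P and Q are self-framing, mod(C) = ∅, ⊢𝓛 {P} C {Q}, and the axiomatic CoreIVL triple Δ ⊢ [A] exhale P; inhale Q [B] holds, then ⊢𝓛 {A} C {B}. -/

import Mathlib

/-- An IDF algebra: a partial commutative monoid with core, stability predicate
and stabilization, satisfying the axioms of Dardinier et al.
Partiality of `⊕` is modeled via `Option`; `op a b = some c` asserts that
`a ⊕ b` is defined and equals `c`. -/
structure IDF (α : Type) where
  op : α → α → Option α
  core : α → α
  stable : α → Prop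
  stabilize : α → α
  comm : ∀ a b, op a b = op b a
  assoc : ∀ a b c, (op a b).bind (fun x => op x c) = (op b c).bind (fun y => op a y)
  positivity : ∀ a b c, op a b = some c → op c c = some c → op a a = some a
  core_self : ∀ x, op x (core x) = some x
  core_dup : ∀ x, op (core x) (core x) = some (core x)
  core_max : ∀ x c, op x c = some x → ∃ r, op c r = some (core x)
  core_add : ∀ a b c, op a b = some c → op (core a) (core b) = some (core c)
  cancel : ∀ x a b w, op x a = some w → op x b = some w → core a = core b → a = b
  stable_stabilize : ∀ ω, stable ω → stabilize ω = ω
  stabilize_stable : ∀ ω, stable (stabilize ω)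
  stabilize_add : ∀ a b c, op a b = some c → op (stabilize a) (stabilize b) = some (stabilize c)
  stabilize_core : ∀ x, op (stabilize x) (core x) = some x
  stabilize_core_unit : ∀ a b c, op b (stabilize (core c)) = some a → a = b

namespace IDF

variable {α : Type}

/-- `Alg.ge x y` means `x ⪰ y`, i.e. `∃ r, x = y ⊕ r`. -/
def ge (Alg : IDF α) (x y : α) : Prop := ∃ r, Alg.op y r = some x

/-- Separating conjunction of (semantic) assertions. -/
def star (Alg : IDF α) (P Q : Set α) : Set α :=
  {ω | ∃ p ∈ P, ∃ q ∈ Q, Alg.op p q = some ω}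

/-- `P` is self-framing. -/
def selfFraming (Alg : IDF α) (P : Set α) : Prop :=
  ∀ ω, ω ∈ P ↔ Alg.stabilize ω ∈ P

/-- The state `ω` frames the assertion `P`. -/
def framesState (Alg : IDF α) (ω : α) (P : Set α) : Prop :=
  Alg.selfFraming (Alg.star {ω} P)

/-- The assertion `B` frames the assertion `P`: every stable state of `B` frames `P`. -/
def framesAssert (Alg : IDF α) (B P : Set α) : Prop :=
  ∀ ω ∈ B, Alg.stable ω → Alg.framesState ω P

end IDF

/-! CoreIVL: states, statements, operational and axiomatic semantics. -/

abbrev Var := ℕ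

/-- A CoreIVL state: a variable store paired with an IDF algebra state. -/
structure PState (Val α : Type) where
  store : Var → Option Val
  st : α

namespace CoreIVL

variable {Val α : Type}

open Classical

/-- Addition on CoreIVL states: agreement on stores, IDF addition on the algebra part. -/
noncomputable def pop (Alg : IDF α) (ω1 ω2 : PState Val α) : Option (PState Val α) :=
  if ω1.store = ω2.store then (Alg.op ω1.st ω2.st).map (fun a => ⟨ω1.store, a⟩) else none

def pstable (Alg : IDF α) (ω : PState Val α) : Prop := Alg.stable ω.st

def pstabilize (Alg : IDF α) (ω : PState Val α) : PState Val α :=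
  ⟨ω.store, Alg.stabilize ω.st⟩

/-- Separating conjunction on CoreIVL assertions. -/
def pstar (Alg : IDF α) (P Q : Set (PState Val α)) : Set (PState Val α) :=
  {ω | ∃ p ∈ P, ∃ q ∈ Q, pop Alg p q = some ω}

def pselfFraming (Alg : IDF α) (P : Set (PState Val α)) : Prop :=
  ∀ ω, ω ∈ P ↔ pstabilize Alg ω ∈ P

def pframesState (Alg : IDF α) (ω : PState Val α) (P : Set (PState Val α)) : Prop :=
  pselfFraming Alg (pstar Alg {ω} P)

/-- `x ⪰ y` on CoreIVL states. -/
def pge (Alg : IDF α) (x y : PState Val α) : Prop := ∃ r, pop Alg y r = some x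

/-- Update of a local variable. -/
def pupdate (ω : PState Val α) (x : Var) (v : Val) : PState Val α :=
  ⟨fun y => if y = x then some v else ω.store y, ω.st⟩

/-- A state is well-typed w.r.t. a type context `Δ`. -/
def wt (Δ : Var → Set Val) (ω : PState Val α) : Prop :=
  ∀ x v, ω.store x = some v → v ∈ Δ x

/-- CoreIVL statements, with semantic assertions and expressions. -/
inductive Stmt (Val α : Type) where
  | inhale (A : Set (PState Val α))
  | exhale (A : Set (PState Val α))
  | havoc (x : Var)
  | seq (C1 C2 : Stmt Val α)
  | ite (b : PState Val α → Option Bool) (C1 C2 : Stmt Val α)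
  | assign (x : Var) (e : PState Val α → Option Val)
  | skip

/-- Operational (big-step, dual non-deterministic) semantics of CoreIVL:
`red Alg Δ C ω S` means `⟨C, ω⟩ →_Δ S`. -/
inductive red (Alg : IDF α) (Δ : Var → Set Val) :
    Stmt Val α → PState Val α → Set (PState Val α) → Prop where
  | inhale {As : Set (PState Val α)} {ω} :
      pframesState Alg ω As →
      red Alg Δ (.inhale As) ω
        {ω' | ∃ ωA ∈ As, pop Alg ω ωA = some ω' ∧ pstable Alg ω'}
  | exhale {As : Set (PState Val α)} {ω ω' ωA} :
      ωA ∈ As → pop Alg ω' ωA = some ω → pstable Alg ω' →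
      red Alg Δ (.exhale As) ω {ω'}
  | seq {C1 C2 ω S1} {𝒮 : PState Val α → Set (PState Val α)} :
      red Alg Δ C1 ω S1 → (∀ ω1 ∈ S1, red Alg Δ C2 ω1 (𝒮 ω1)) →
      red Alg Δ (.seq C1 C2) ω (⋃ ω1 ∈ S1, 𝒮 ω1)
  | assign {x e ω v} :
      e ω = some v → v ∈ Δ x →
      red Alg Δ (.assign x e) ω {pupdate ω x v}
  | skip {ω} : red Alg Δ .skip ω {ω}
  | havoc {x ω} :
      red Alg Δ (.havoc x) ω {ω' | ∃ v ∈ Δ x, ω' = pupdate ω x v}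
  | iteT {b C1 C2 ω S1} :
      b ω = some true → red Alg Δ C1 ω S1 → red Alg Δ (.ite b C1 C2) ω S1
  | iteF {b C1 C2 ω S2} :
      b ω = some false → red Alg Δ C2 ω S2 → red Alg Δ (.ite b C1 C2) ω S2

/-- Axiomatic semantics of CoreIVL: `ax Alg Δ P C Q` means `Δ ⊢ [P] C [Q]`. -/
inductive ax (Alg : IDF α) (Δ : Var → Set Val) :
    Set (PState Val α) → Stmt Val α → Set (PState Val α) → Prop where
  | skip {P} : pselfFraming Alg P → ax Alg Δ P .skip P
  | inhale {P As} :
      pselfFraming Alg P →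
      (∀ ω ∈ P, pstable Alg ω → pframesState Alg ω As) →
      ax Alg Δ P (.inhale As) (pstar Alg P As)
  | exhale {P Q As} :
      pselfFraming Alg P → P ⊆ pstar Alg Q As → pselfFraming Alg Q →
      ax Alg Δ P (.exhale As) Q
  | ite {P b C1 C2 B1 B2} :
      pselfFraming Alg P → (∀ ω ∈ P, (b ω).isSome) →
      ax Alg Δ {ω | ω ∈ P ∧ b ω = some true} C1 B1 →
      ax Alg Δ {ω | ω ∈ P ∧ b ω = some false} C2 B2 →
      ax Alg Δ P (.ite b C1 C2) (B1 ∪ B2)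
  | havoc {P x} :
      pselfFraming Alg P →
      ax Alg Δ P (.havoc x) {ω' | ∃ v ∈ Δ x, ∃ ω ∈ P, ω' = pupdate ω x v}
  | seq {P C1 R C2 Q} :
      ax Alg Δ P C1 R → ax Alg Δ R C2 Q → ax Alg Δ P (.seq C1 C2) Q
  | assign {P x e} :
      pselfFraming Alg P → (∀ ω ∈ P, (e ω).isSome) →
      ax Alg Δ P (.assign x e)
        {ω' | ∃ v, pupdate ω' x v ∈ P ∧ e (pupdate ω' x v) = ω'.store x}

/-- An assertion `F` is independent of variable `x` (i.e. `x ∉ fv(F)`). -/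
def indep (F : Set (PState Val α)) (x : Var) : Prop :=
  ∀ ω v, ω ∈ F ↔ pupdate ω x v ∈ F

end CoreIVL

namespace CoreIVL

variable {Val α : Type} (Alg : IDF α)

lemma pop_comm (a b : PState Val α) : pop Alg a b = pop Alg b a := by
  unfold pop
  by_cases h : a.store = b.store
  · simp [h, Alg.comm]
  · rw [if_neg h, if_neg (Ne.symm h)]

lemma pstar_comm (P Q : Set (PState Val α)) : pstar Alg P Q = pstar Alg Q P := by
  ext ω
  constructor <;> rintro ⟨p, hp, q, hq, hpq⟩ <;> exact ⟨q, hq, p, hp, by rwa [pop_comm]⟩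

lemma ax_exhale_seq_inhale_inv {Δ : Var → Set Val} {A P Q B : Set (PState Val α)}
    (h : ax Alg Δ A (.seq (.exhale P) (.inhale Q)) B) :
    ∃ R, pselfFraming Alg R ∧ A ⊆ pstar Alg R P ∧ B = pstar Alg R Q := by
  cases h with
  | seq hexhale hinhale =>
    cases hexhale with
    | exhale _ hAR hR =>
      cases hinhale with
      | inhale _ _ => exact ⟨_, hR, hAR, rfl⟩

end CoreIVL

open CoreIVL in
theorem exhale_inhale_no_havoc_general {Val α γ : Type} (Alg : IDF α) (Δ : Var → Set Val)
    (mods : γ → Set Var)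
    (triple : Set (PState Val α) → γ → Set (PState Val α) → Prop)
    -- 𝓛 has a frame rule:
    (hframe : ∀ (P : Set (PState Val α)) (C : γ) (Q F : Set (PState Val α)),
      triple P C Q → pselfFraming Alg P → pselfFraming Alg F →
      (∀ x ∈ mods C, indep F x) →
      triple (pstar Alg P F) C (pstar Alg Q F))
    -- 𝓛 has a consequence rule:
    (hcons : ∀ (P P' : Set (PState Val α)) (C : γ) (Q Q' : Set (PState Val α)),
      triple P' C Q' → P ⊆ P' → Q' ⊆ Q → triple P C Q)
    (P Q A B : Set (PState Val α)) (C : γ)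
    (hPsf : pselfFraming Alg P)
    (hmod : mods C = ∅)
    (hPQ : triple P C Q)
    (hax : ax Alg Δ A (.seq (.exhale P) (.inhale Q)) B) :
    triple A C B := by
  obtain ⟨R, hR, hAR, rfl⟩ := ax_exhale_seq_inhale_inv Alg hax
  have hframed : triple (pstar Alg P R) C (pstar Alg Q R) :=
    hframe P C Q R hPQ hPsf hR (by simp [hmod])
  exact hcons _ _ _ _ _ hframed (pstar_comm Alg R P ▸ hAR) (pstar_comm Alg Q R).le

open CoreIVL in
/-- the havoc-free special case of the exhale-havoc-inhale
lemma: if `mod(C) = ∅`, `P` and `Q` are self-framing, `⊢𝓛 {P} C {Q}` and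
`Δ ⊢ [A] exhale P; inhale Q [B]`, then `⊢𝓛 {A} C {B}`. -/
theorem exhale_inhale_no_havoc {Val α γ : Type} (Alg : IDF α) (Δ : Var → Set Val)
    (mods : γ → Set Var)
    (triple : Set (PState Val α) → γ → Set (PState Val α) → Prop)
    -- 𝓛 has a frame rule:
    (hframe : ∀ (P : Set (PState Val α)) (C : γ) (Q F : Set (PState Val α)),
      triple P C Q → pselfFraming Alg P → pselfFraming Alg F →
      (∀ x ∈ mods C, indep F x) →
      triple (pstar Alg P F) C (pstar Alg Q F))
    -- 𝓛 has a consequence rule: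
    (hcons : ∀ (P P' : Set (PState Val α)) (C : γ) (Q Q' : Set (PState Val α)),
      triple P' C Q' → P ⊆ P' → Q' ⊆ Q → triple P C Q)
    (P Q A B : Set (PState Val α)) (C : γ)
    (hPsf : pselfFraming Alg P) (hQsf : pselfFraming Alg Q)
    (hmod : mods C = ∅)
    (hPQ : triple P C Q)
    (hax : ax Alg Δ A (.seq (.exhale P) (.inhale Q)) B) :
    triple A C B :=
  exhale_inhale_no_havoc_general Alg Δ mods triple hframe hcons P Q A B C hPsf hmod hPQ hax
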